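/- Let λ be a strict partition and k ≥ 1. For a strict partition ν contained in λ, the skew diagram λ∖ν is a removable double k-ribbon of λ if and only if the set of parts of ν is obtained from the set of parts of λ by deleting two parts a > b ≥ 1 with a + b = k; in that case the head of the ribbon has diagonal value a. In particular, λ admits a removable double k-ribbon with head of diagonal value a if and only if both a and k − a are parts of λ and a > k − a, and the ribbon is then unique. -/

import Mathlib

def IsStrictPartition (s : Finset ℕ) : Prop := ∀ x ∈ s, 0 < x

/-- The `i`-th largest part of `s` (1-indexed); `0` if out of range. -/
def nthPart (s : Finset ℕ) (i : ℕ) : ℕ := (s.sort (· ≤ ·)).reverse.getD (i - 1) 0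

/-- The shifted diagram: row `i` (1-indexed) has cells `(i, j)` with `i ≤ j ≤ i + λᵢ - 1`. -/
def shiftedDiagram (s : Finset ℕ) : Set (ℕ × ℕ) :=
  {c | 1 ≤ c.1 ∧ c.1 ≤ c.2 ∧ c.2 + 1 ≤ c.1 + nthPart s c.1}

def skewDiag (lam nu : Finset ℕ) : Set (ℕ × ℕ) := shiftedDiagram lam \ shiftedDiagram nu

/-- Diagonal value `j - i + 1` of a cell `(i, j)`. -/
def diagVal (c : ℕ × ℕ) : ℕ := c.2 + 1 - c.1

def CellAdj (c d : ℕ × ℕ) : Prop :=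
  (c.1 = d.1 ∧ (c.2 + 1 = d.2 ∨ d.2 + 1 = c.2)) ∨
  (c.2 = d.2 ∧ (c.1 + 1 = d.1 ∨ d.1 + 1 = c.1))

def EdgeConnected (S : Set (ℕ × ℕ)) : Prop :=
  ∀ c ∈ S, ∀ d ∈ S, Relation.ReflTransGen (fun x y => CellAdj x y ∧ x ∈ S ∧ y ∈ S) c d

def IsHead (S : Set (ℕ × ℕ)) (c : ℕ × ℕ) : Prop :=
  c ∈ S ∧ ∀ d ∈ S, diagVal d ≤ diagVal c

def IsTail (S : Set (ℕ × ℕ)) (c : ℕ × ℕ) : Prop :=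
  c ∈ S ∧ ∀ d ∈ S, diagVal c ≤ diagVal d

def IsRemovableSingleRibbon (lam nu : Finset ℕ) (k : ℕ) : Prop :=
  IsStrictPartition lam ∧ IsStrictPartition nu ∧
  shiftedDiagram nu ⊆ shiftedDiagram lam ∧
  (skewDiag lam nu).ncard = k ∧
  EdgeConnected (skewDiag lam nu) ∧
  Set.InjOn diagVal (skewDiag lam nu)

def IsDoubleDecomp (lam nu : Finset ℕ) (R S : Set (ℕ × ℕ)) : Prop :=
  IsStrictPartition lam ∧ IsStrictPartition nu ∧
  shiftedDiagram nu ⊆ shiftedDiagram lam ∧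
  Disjoint R S ∧ R ∪ S = skewDiag lam nu ∧
  R.Nonempty ∧ EdgeConnected R ∧ Set.InjOn diagVal R ∧
  S.Nonempty ∧ EdgeConnected S ∧ Set.InjOn diagVal S ∧
  S.ncard ≤ R.ncard ∧
  (∃ a, IsTail R (a, a)) ∧ (∃ b, IsTail S (b, b)) ∧
  (∃ mu : Finset ℕ, IsStrictPartition mu ∧ shiftedDiagram mu = shiftedDiagram lam \ R)

def IsRemovableDoubleRibbon (lam nu : Finset ℕ) (k : ℕ) : Prop :=
  (skewDiag lam nu).ncard = k ∧ ∃ R S, IsDoubleDecomp lam nu R S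

def IsRemovableRibbon (lam nu : Finset ℕ) (k : ℕ) : Prop :=
  IsRemovableSingleRibbon lam nu k ∨ IsRemovableDoubleRibbon lam nu k

/-!
Read a shifted diagram along its diagonals: the cells of diagonal value `e + 1` are those in
rows `1, …, m(e)`, where `m(e) = numPartsGt λ e` counts the parts of `λ` exceeding `e`, so
`λ ∖ ν` meets that diagonal in `m_λ(e) - m_ν(e)` cells. Along an edge the diagonal value moves
by one, so a connected ribbon whose tail is on the main diagonal and whose diagonal values are
distinct meets exactly the diagonals `1, …, |R|`, once each. For a double ribbon `R ∪ S` this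
gives `m_λ(e) = m_ν(e) + [e < |R|] + [e < |S|]`; differencing in `e` shows that `λ` consists of
the parts of `ν` together with `|R|` and `|S|`, which must therefore be distinct parts.
Conversely, `λ ∖ (λ - {a})` is the strip of last cells of the diagonals `1, …, a`, so deleting
`a` and then `b` produces the two ribbons, and the head lies on diagonal `a`.
-/

open Finset

def numPartsGt (s : Finset ℕ) (e : ℕ) : ℕ := #(s.filter (e < ·))

section NumPartsGt

variable {s : Finset ℕ} {a e : ℕ}

lemma numPartsGt_eq_succ_add (s : Finset ℕ) (e : ℕ) :
    numPartsGt s e = numPartsGt s (e + 1) + if e + 1 ∈ s then 1 else 0 := by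
  have hsplit : s.filter (e < ·) = s.filter (e + 1 < ·) ∪ s.filter (· = e + 1) := by
    ext x; simp only [mem_filter, mem_union, ← and_or_left]
    exact and_congr_right fun _ => by omega
  rw [numPartsGt, numPartsGt, hsplit, card_union_of_disjoint, filter_eq']
  · split_ifs <;> simp
  · exact disjoint_filter.mpr fun x _ h h' => by omega

lemma numPartsGt_pos (ha : a ∈ s) (he : e < a) : 0 < numPartsGt s e :=
  card_pos.mpr ⟨a, mem_filter.mpr ⟨ha, he⟩⟩

lemma numPartsGt_erase (ha : a ∈ s) (e : ℕ) :
    numPartsGt (s.erase a) e = numPartsGt s e - if e < a then 1 else 0 := by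
  rw [numPartsGt, numPartsGt, filter_erase]
  split_ifs with he
  · rw [card_erase_of_mem (mem_filter.mpr ⟨ha, he⟩)]
  · rw [erase_eq_of_notMem fun h => he (mem_filter.mp h).2, Nat.sub_zero]

end NumPartsGt

lemma List.lt_length_filter_iff_lt_getD {L : List ℕ} (hL : L.Pairwise (· ≥ ·)) (e j : ℕ) :
    j < (L.filter (e < ·)).length ↔ e < L.getD j 0 := by
  induction L generalizing j with
  | nil => simp
  | cons x L ih =>
    rw [List.pairwise_cons] at hL
    by_cases hx : e < x
    · rw [List.filter_cons_of_pos (by simpa using hx)]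
      cases j with
      | zero => simpa using hx
      | succ j => simpa using ih hL.2 j
    · have hnil : L.filter (e < ·) = [] := List.filter_eq_nil_iff.mpr
        fun y hy => by simpa using (hL.1 y hy).trans (not_lt.mp hx)
      rw [List.filter_cons_of_neg (by simpa using hx), hnil]
      cases j with
      | zero => simpa using hx
      | succ j => simpa [hnil] using ih hL.2 j

lemma length_filter_reverse_sort (s : Finset ℕ) (p : ℕ → Prop) [DecidablePred p] :
    ((s.sort (· ≤ ·)).reverse.filter p).length = #(s.filter p) := by
  rw [List.filter_reverse, List.length_reverse, ← Multiset.coe_card, ← Multiset.filter_coe,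
    sort_eq]
  rfl

lemma lt_nthPart_iff {s : Finset ℕ} {i : ℕ} (hi : 1 ≤ i) (e : ℕ) :
    e < nthPart s i ↔ i ≤ numPartsGt s e := by
  have hsorted : (s.sort (· ≤ ·)).reverse.Pairwise (· ≥ ·) :=
    List.pairwise_reverse.mpr (s.pairwise_sort _)
  have h := List.lt_length_filter_iff_lt_getD hsorted e (i - 1)
  rw [length_filter_reverse_sort] at h
  rw [nthPart, ← h]
  show i - 1 < numPartsGt s e ↔ i ≤ numPartsGt s e
  omega

lemma mk_add_mem_shiftedDiagram_iff {s : Finset ℕ} {i e : ℕ} :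
    (i, i + e) ∈ shiftedDiagram s ↔ 1 ≤ i ∧ i ≤ numPartsGt s e := by
  simp only [shiftedDiagram, Set.mem_ofPred_eq]
  constructor
  · rintro ⟨hi, -, h⟩
    exact ⟨hi, (lt_nthPart_iff hi e).mp (by omega)⟩
  · rintro ⟨hi, h⟩
    have := (lt_nthPart_iff hi e).mpr h
    omega

lemma exists_eq_mk_add_of_mem_shiftedDiagram {s : Finset ℕ} {c : ℕ × ℕ}
    (hc : c ∈ shiftedDiagram s) : ∃ i e, c = (i, i + e) :=
  ⟨c.1, c.2 - c.1, Prod.ext rfl (by have := hc.2.1; dsimp only; omega)⟩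

lemma diagVal_mk_add (i e : ℕ) : diagVal (i, i + e) = e + 1 := by
  simp only [diagVal]; omega

lemma shiftedDiagram_subset_iff {s t : Finset ℕ} :
    shiftedDiagram s ⊆ shiftedDiagram t ↔ ∀ e, numPartsGt s e ≤ numPartsGt t e := by
  constructor
  · intro h e
    by_contra! hlt
    have hcell : (numPartsGt s e, numPartsGt s e + e) ∈ shiftedDiagram s :=
      mk_add_mem_shiftedDiagram_iff.mpr ⟨by omega, le_rfl⟩
    have := (mk_add_mem_shiftedDiagram_iff.mp (h hcell)).2
    omega
  · intro h c hc
    obtain ⟨i, e, rfl⟩ := exists_eq_mk_add_of_mem_shiftedDiagram hc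
    rw [mk_add_mem_shiftedDiagram_iff] at hc ⊢
    exact ⟨hc.1, hc.2.trans (h e)⟩

lemma shiftedDiagram_finite (s : Finset ℕ) : (shiftedDiagram s).Finite := by
  refine (Set.finite_Iic (#s, #s + s.sup id)).subset fun c hc => ?_
  obtain ⟨i, e, rfl⟩ := exists_eq_mk_add_of_mem_shiftedDiagram hc
  obtain ⟨hi, hie⟩ := mk_add_mem_shiftedDiagram_iff.mp hc
  obtain ⟨x, hx⟩ := card_pos.mp (hi.trans hie)
  have hex : e < x := (mem_filter.mp hx).2
  have hxsup : x ≤ s.sup id := le_sup (f := id) (mem_filter.mp hx).1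
  have hcard : numPartsGt s e ≤ #s := card_filter_le _ _
  simp only [Set.mem_Iic, Prod.mk_le_mk]
  omega

lemma mk_add_mem_skewDiag_iff {lam nu : Finset ℕ} {i e : ℕ} :
    (i, i + e) ∈ skewDiag lam nu ↔ numPartsGt nu e < i ∧ i ≤ numPartsGt lam e := by
  rw [skewDiag, Set.mem_sdiff, mk_add_mem_shiftedDiagram_iff, mk_add_mem_shiftedDiagram_iff]
  omega

lemma ncard_skewDiag_inter_diagVal_preimage (lam nu : Finset ℕ) (e : ℕ) :
    (skewDiag lam nu ∩ diagVal ⁻¹' {e + 1}).ncard = numPartsGt lam e - numPartsGt nu e := by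
  have hslice : skewDiag lam nu ∩ diagVal ⁻¹' {e + 1}
      = (fun i => (i, i + e)) '' Set.Ioc (numPartsGt nu e) (numPartsGt lam e) := by
    ext c
    constructor
    · rintro ⟨hc, hd⟩
      obtain ⟨i, e', rfl⟩ := exists_eq_mk_add_of_mem_shiftedDiagram hc.1
      obtain rfl : e' = e := by simpa [diagVal_mk_add] using hd
      exact ⟨i, mk_add_mem_skewDiag_iff.mp hc, rfl⟩
    · rintro ⟨i, hi, rfl⟩
      exact ⟨mk_add_mem_skewDiag_iff.mpr hi, diagVal_mk_add i e⟩
  rw [hslice, Set.ncard_image_of_injective _ fun i j h => congrArg Prod.fst h,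
    Set.ncard_Ioc_nat]

section Ribbon

variable {T : Set (ℕ × ℕ)}

lemma CellAdj.diagVal_eq_succ_or {c d : ℕ × ℕ} (h : CellAdj c d) (hc : c.1 ≤ c.2)
    (hd : d.1 ≤ d.2) : diagVal d = diagVal c + 1 ∨ diagVal c = diagVal d + 1 := by
  simp only [CellAdj] at h
  simp only [diagVal]
  omega

lemma EdgeConnected.ordConnected_image_diagVal (hconn : EdgeConnected T)
    (hT : ∀ c ∈ T, c.1 ≤ c.2) : (diagVal '' T).OrdConnected := by
  refine ⟨?_⟩
  rintro _ ⟨c, hc, rfl⟩ _ ⟨d, hd, rfl⟩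
  refine (Set.Icc_subset_uIcc).trans ?_
  induction hconn c hc d hd with
  | refl => simpa using Set.mem_image_of_mem diagVal hc
  | @tail x y _ hxy ih =>
    obtain ⟨hadj, hx, hy⟩ := hxy
    have hstep := hadj.diagVal_eq_succ_or (hT x hx) (hT y hy)
    intro v hv
    by_cases hvy : v = diagVal y
    · exact ⟨y, hy, hvy.symm⟩
    · exact ih hx (by rw [Set.mem_uIcc] at hv ⊢; omega)

lemma diagVal_image_eq_Icc (hfin : T.Finite) (hT : ∀ c ∈ T, c.1 ≤ c.2)
    (hconn : EdgeConnected T) (hinj : Set.InjOn diagVal T) {t : ℕ} (ht : (t, t) ∈ T) :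
    diagVal '' T = Set.Icc 1 T.ncard := by
  obtain ⟨c₀, hc₀, hmax⟩ := Set.exists_max_image T diagVal hfin ⟨_, ht⟩
  have hone : diagVal (t, t) = 1 := by simp [diagVal]
  have him : diagVal '' T = Set.Icc 1 (diagVal c₀) := by
    refine subset_antisymm ?_ ((hconn.ordConnected_image_diagVal hT).out
      ⟨_, ht, hone⟩ ⟨_, hc₀, rfl⟩)
    rintro _ ⟨c, hc, rfl⟩
    exact ⟨by have := hT c hc; simp only [diagVal]; omega, hmax c hc⟩
  rw [him, ← hinj.ncard_image, him, Set.ncard_Icc_nat, Nat.add_sub_cancel]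

lemma ncard_inter_diagVal_preimage (hinj : Set.InjOn diagVal T) {n : ℕ}
    (him : diagVal '' T = Set.Icc 1 n) (e : ℕ) :
    (T ∩ diagVal ⁻¹' {e + 1}).ncard = if e < n then 1 else 0 := by
  rw [← (hinj.mono Set.inter_subset_left).ncard_image, Set.image_inter_preimage,
    him]
  split_ifs with he
  · rw [Set.inter_eq_right.mpr (by simp; omega), Set.ncard_singleton]
  · rw [Set.inter_singleton_eq_empty.mpr (by simp; omega), Set.ncard_empty]

lemma diagVal_eq_of_isHead {n : ℕ} (him : diagVal '' T = Set.Icc 1 n) {c : ℕ × ℕ}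
    (hc : IsHead T c) : diagVal c = n := by
  have hc_mem : diagVal c ∈ Set.Icc 1 n := him ▸ Set.mem_image_of_mem diagVal hc.1
  obtain ⟨d, hd, hdn⟩ : n ∈ diagVal '' T := him ▸ ⟨hc_mem.1.trans hc_mem.2, le_rfl⟩
  exact le_antisymm hc_mem.2 (hdn ▸ hc.2 d hd)

lemma exists_isHead_diagVal_eq {n : ℕ} (hn : 1 ≤ n) (him : diagVal '' T = Set.Icc 1 n) :
    ∃ c, IsHead T c ∧ diagVal c = n := by
  obtain ⟨c, hc, hcn⟩ : n ∈ diagVal '' T := him ▸ ⟨hn, le_rfl⟩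
  exact ⟨c, ⟨hc, fun d hd => hcn ▸ (him ▸ Set.mem_image_of_mem diagVal hd).2⟩, hcn⟩

end Ribbon

lemma IsStrictPartition.erase {s : Finset ℕ} (hs : IsStrictPartition s) (a : ℕ) :
    IsStrictPartition (s.erase a) :=
  fun x hx => hs x (mem_of_mem_erase hx)

lemma shiftedDiagram_mono {s t : Finset ℕ} (h : s ⊆ t) :
    shiftedDiagram s ⊆ shiftedDiagram t :=
  shiftedDiagram_subset_iff.mpr fun _ => card_le_card (filter_subset_filter _ h)

lemma skewDiag_finite (lam nu : Finset ℕ) : (skewDiag lam nu).Finite :=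
  (shiftedDiagram_finite lam).subset Set.sdiff_subset

lemma CellAdj.symm {c d : ℕ × ℕ} (h : CellAdj c d) : CellAdj d c := by
  simp only [CellAdj] at *
  omega

lemma edgeConnected_image_Iio {f : ℕ → ℕ × ℕ} {n : ℕ}
    (hf : ∀ e, e + 1 < n → CellAdj (f e) (f (e + 1))) : EdgeConnected (f '' Set.Iio n) := by
  set r := fun x y => CellAdj x y ∧ x ∈ f '' Set.Iio n ∧ y ∈ f '' Set.Iio n
  have : Std.Symm r := ⟨fun _ _ ⟨hxy, hx, hy⟩ => ⟨hxy.symm, hy, hx⟩⟩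
  have hchain : ∀ e < n, Relation.ReflTransGen r (f 0) (f e) := by
    intro e
    induction e with
    | zero => exact fun _ => .refl
    | succ e ih =>
      refine fun he => (ih (by omega)).tail ⟨hf e he, ⟨e, ?_, rfl⟩, ⟨e + 1, he, rfl⟩⟩
      simp only [Set.mem_Iio]
      omega
  rintro _ ⟨e, he, rfl⟩ _ ⟨e', he', rfl⟩
  exact (Std.Symm.symm _ _ (hchain e he)).trans (hchain e' he')

section Strip

variable {s : Finset ℕ} {a : ℕ}

/-- The last cell of the diagonal of value `e + 1` in the shifted diagram of `s`. -/
def stripCell (s : Finset ℕ) (e : ℕ) : ℕ × ℕ := (numPartsGt s e, numPartsGt s e + e)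

lemma diagVal_stripCell (s : Finset ℕ) (e : ℕ) : diagVal (stripCell s e) = e + 1 :=
  diagVal_mk_add _ _

lemma stripCell_injective (s : Finset ℕ) : Function.Injective (stripCell s) :=
  fun e e' h => by simpa [diagVal_stripCell] using congrArg diagVal h

lemma cellAdj_stripCell_succ (s : Finset ℕ) (e : ℕ) :
    CellAdj (stripCell s e) (stripCell s (e + 1)) := by
  have := numPartsGt_eq_succ_add s e
  simp only [CellAdj, stripCell]
  split_ifs at this <;> omega

lemma skewDiag_erase_eq (ha : a ∈ s) : skewDiag s (s.erase a) = stripCell s '' Set.Iio a := by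
  ext c
  constructor
  · intro hc
    obtain ⟨i, e, rfl⟩ := exists_eq_mk_add_of_mem_shiftedDiagram hc.1
    rw [mk_add_mem_skewDiag_iff, numPartsGt_erase ha] at hc
    by_cases he : e < a
    · rw [if_pos he] at hc
      exact ⟨e, he, by simp only [stripCell]; congr <;> omega⟩
    · rw [if_neg he] at hc
      omega
  · rintro ⟨e, he, rfl⟩
    have := numPartsGt_pos ha he
    rw [stripCell, mk_add_mem_skewDiag_iff, numPartsGt_erase ha, if_pos (Set.mem_Iio.mp he)]
    omega

variable (ha : a ∈ s)
include ha

lemma diagVal_image_skewDiag_erase : diagVal '' skewDiag s (s.erase a) = Set.Icc 1 a := by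
  ext v
  simp only [skewDiag_erase_eq ha, Set.image_image, diagVal_stripCell, Set.mem_image,
    Set.mem_Iio, Set.mem_Icc]
  exact ⟨by rintro ⟨e, he, rfl⟩; omega, fun hv => ⟨v - 1, by omega, by omega⟩⟩

lemma ncard_skewDiag_erase : (skewDiag s (s.erase a)).ncard = a := by
  rw [skewDiag_erase_eq ha, Set.ncard_image_of_injective _ (stripCell_injective s),
    Set.ncard_Iio_nat]

lemma edgeConnected_skewDiag_erase : EdgeConnected (skewDiag s (s.erase a)) :=
  skewDiag_erase_eq ha ▸ edgeConnected_image_Iio fun e _ => cellAdj_stripCell_succ s e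

lemma injOn_diagVal_skewDiag_erase : Set.InjOn diagVal (skewDiag s (s.erase a)) := by
  rw [skewDiag_erase_eq ha]
  rintro _ ⟨e, -, rfl⟩ _ ⟨e', -, rfl⟩ h
  rw [diagVal_stripCell, diagVal_stripCell] at h
  rw [Nat.succ_injective h]

lemma isTail_skewDiag_erase (ha0 : 0 < a) :
    IsTail (skewDiag s (s.erase a)) (numPartsGt s 0, numPartsGt s 0) := by
  refine ⟨skewDiag_erase_eq ha ▸ ⟨0, ha0, rfl⟩, fun d hd => ?_⟩
  have := (diagVal_image_skewDiag_erase ha ▸ Set.mem_image_of_mem diagVal hd).1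
  simpa [diagVal] using this

end Strip

section EraseTwo

variable {s : Finset ℕ} {a b : ℕ}

lemma skewDiag_erase_erase_eq_union (s : Finset ℕ) (a b : ℕ) :
    skewDiag s ((s.erase a).erase b)
      = skewDiag s (s.erase a) ∪ skewDiag (s.erase a) ((s.erase a).erase b) :=
  (Set.sdiff_union_sdiff_cancel (shiftedDiagram_mono (erase_subset a s))
    (shiftedDiagram_mono (erase_subset b _))).symm

variable (ha : a ∈ s) (hb : b ∈ s) (hba : b < a)
include ha hb hba

lemma diagVal_image_skewDiag_erase_erase :
    diagVal '' skewDiag s ((s.erase a).erase b) = Set.Icc 1 a := by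
  rw [skewDiag_erase_erase_eq_union, Set.image_union, diagVal_image_skewDiag_erase ha,
    diagVal_image_skewDiag_erase (mem_erase_of_ne_of_mem hba.ne hb)]
  exact Set.union_eq_left.mpr (Set.Icc_subset_Icc le_rfl hba.le)

lemma isRemovableDoubleRibbon_erase_erase (hs : IsStrictPartition s) (hb0 : 0 < b) :
    IsRemovableDoubleRibbon s ((s.erase a).erase b) (a + b) := by
  have hb' := mem_erase_of_ne_of_mem hba.ne hb
  have hsub : shiftedDiagram (s.erase a) ⊆ shiftedDiagram s :=
    shiftedDiagram_mono (erase_subset a s)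
  have hsub' : shiftedDiagram ((s.erase a).erase b) ⊆ shiftedDiagram (s.erase a) :=
    shiftedDiagram_mono (erase_subset b _)
  have hdisj : Disjoint (skewDiag s (s.erase a)) (skewDiag (s.erase a) ((s.erase a).erase b)) :=
    Set.disjoint_sdiff_left.mono_right Set.sdiff_subset
  refine ⟨?_, _, _, hs, (hs.erase a).erase b, hsub'.trans hsub, hdisj,
    (skewDiag_erase_erase_eq_union s a b).symm,
    ⟨_, (isTail_skewDiag_erase ha (hb0.trans hba)).1⟩, edgeConnected_skewDiag_erase ha,
    injOn_diagVal_skewDiag_erase ha,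
    ⟨_, (isTail_skewDiag_erase hb' hb0).1⟩, edgeConnected_skewDiag_erase hb',
    injOn_diagVal_skewDiag_erase hb',
    by rw [ncard_skewDiag_erase ha, ncard_skewDiag_erase hb']; exact hba.le,
    ⟨_, isTail_skewDiag_erase ha (hb0.trans hba)⟩, ⟨_, isTail_skewDiag_erase hb' hb0⟩,
    ⟨s.erase a, hs.erase a, (Set.sdiff_sdiff_cancel_left hsub).symm⟩⟩
  rw [skewDiag_erase_erase_eq_union, Set.ncard_union_eq hdisj (skewDiag_finite _ _)
    (skewDiag_finite _ _), ncard_skewDiag_erase ha, ncard_skewDiag_erase hb']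

end EraseTwo

lemma IsDoubleDecomp.numPartsGt_eq {lam nu : Finset ℕ} {R S : Set (ℕ × ℕ)}
    (h : IsDoubleDecomp lam nu R S) (e : ℕ) :
    numPartsGt lam e = numPartsGt nu e + (if e < R.ncard then 1 else 0)
      + (if e < S.ncard then 1 else 0) := by
  obtain ⟨-, -, hsub, hdisj, hunion, -, hRconn, hRinj, -, hSconn, hSinj, -, ⟨_, hr⟩, ⟨_, ht⟩,
    -⟩ := h
  have hRsub : R ⊆ skewDiag lam nu := hunion ▸ Set.subset_union_left
  have hSsub : S ⊆ skewDiag lam nu := hunion ▸ Set.subset_union_right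
  have hcells : ∀ c ∈ skewDiag lam nu, c.1 ≤ c.2 := fun c hc => hc.1.2.1
  have himR := diagVal_image_eq_Icc ((skewDiag_finite lam nu).subset hRsub)
    (fun c hc => hcells c (hRsub hc)) hRconn hRinj hr.1
  have himS := diagVal_image_eq_Icc ((skewDiag_finite lam nu).subset hSsub)
    (fun c hc => hcells c (hSsub hc)) hSconn hSinj ht.1
  have hslice := ncard_skewDiag_inter_diagVal_preimage lam nu e
  rw [← hunion, Set.union_inter_distrib_right, Set.ncard_union_eq
    (hdisj.mono Set.inter_subset_left Set.inter_subset_left)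
    (((skewDiag_finite lam nu).subset hRsub).subset Set.inter_subset_left)
    (((skewDiag_finite lam nu).subset hSsub).subset Set.inter_subset_left),
    ncard_inter_diagVal_preimage hRinj himR, ncard_inter_diagVal_preimage hSinj himS] at hslice
  have hle := shiftedDiagram_subset_iff.mp hsub e
  omega

lemma eq_erase_erase_of_numPartsGt_eq {lam nu : Finset ℕ} {a b : ℕ}
    (hlam : IsStrictPartition lam) (hnu : IsStrictPartition nu) (hb0 : 0 < b) (hba : b ≤ a)
    (h : ∀ e, numPartsGt lam e
      = numPartsGt nu e + (if e < a then 1 else 0) + (if e < b then 1 else 0)) :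
    a ∈ lam ∧ b ∈ lam ∧ b < a ∧ nu = (lam.erase a).erase b := by
  have hmult : ∀ x, 0 < x → (if x ∈ lam then 1 else 0) = (if x ∈ nu then 1 else 0)
      + (if x = a then 1 else 0) + (if x = b then 1 else 0) := by
    intro x hx
    obtain ⟨e, rfl⟩ : ∃ e, x = e + 1 := ⟨x - 1, by omega⟩
    have := h e
    have := h (e + 1)
    have := numPartsGt_eq_succ_add lam e
    have := numPartsGt_eq_succ_add nu e
    split_ifs at * <;> omega
  have hka := hmult a (hb0.trans_le hba)
  have hkb := hmult b hb0
  have hba' : b < a := by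
    refine lt_of_le_of_ne hba fun hab => ?_
    subst hab
    split_ifs at hka <;> omega
  refine ⟨?_, ?_, hba', ?_⟩
  · by_contra h
    rw [if_neg h, if_pos rfl] at hka
    omega
  · by_contra h
    rw [if_neg h, if_pos rfl] at hkb
    omega
  ext x
  rcases Nat.eq_zero_or_pos x with rfl | hx
  · exact iff_of_false (fun h => (hnu 0 h).false) fun h => ((hlam.erase a).erase b 0 h).false
  · have := hmult x hx
    simp only [mem_erase]
    split_ifs at this <;> grind

section DoubleRibbon

variable {lam nu : Finset ℕ} {k : ℕ}

lemma exists_eq_erase_erase_of_isRemovableDoubleRibbon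
    (h : IsRemovableDoubleRibbon lam nu k) :
    ∃ a ∈ lam, ∃ b ∈ lam, b < a ∧ 1 ≤ b ∧ a + b = k ∧
      nu = (lam.erase a).erase b := by
  obtain ⟨rfl, R, S, hD⟩ := h
  have hslices := hD.numPartsGt_eq
  obtain ⟨hlam, hnu, -, hdisj, hunion, -, -, -, hSne, -, -, hSR, -⟩ := hD
  have hRfin : R.Finite := (skewDiag_finite lam nu).subset (hunion ▸ Set.subset_union_left)
  have hSfin : S.Finite := (skewDiag_finite lam nu).subset (hunion ▸ Set.subset_union_right)
  have hS0 : 0 < S.ncard := (Set.ncard_pos hSfin).mpr hSne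
  obtain ⟨ha, hb, hba, rfl⟩ := eq_erase_erase_of_numPartsGt_eq hlam hnu hS0 hSR hslices
  exact ⟨_, ha, _, hb, hba, hS0, by rw [← hunion, Set.ncard_union_eq hdisj hRfin hSfin], rfl⟩

lemma isRemovableDoubleRibbon_iff (hlam : IsStrictPartition lam) :
    IsRemovableDoubleRibbon lam nu k ↔
      ∃ a ∈ lam, ∃ b ∈ lam, b < a ∧ 1 ≤ b ∧ a + b = k ∧
        nu = (lam.erase a).erase b := by
  refine ⟨exists_eq_erase_erase_of_isRemovableDoubleRibbon, ?_⟩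
  rintro ⟨a, ha, b, hb, hba, hb0, rfl, rfl⟩
  exact isRemovableDoubleRibbon_erase_erase ha hb hba hlam hb0

lemma IsRemovableDoubleRibbon.eq_erase_erase_of_isHead (h : IsRemovableDoubleRibbon lam nu k)
    {c : ℕ × ℕ} (hc : IsHead (skewDiag lam nu) c) :
    diagVal c ∈ lam ∧ k - diagVal c ∈ lam ∧ k - diagVal c < diagVal c ∧
      nu = (lam.erase (diagVal c)).erase (k - diagVal c) := by
  obtain ⟨a, ha, b, hb, hba, -, rfl, rfl⟩ :=
    exists_eq_erase_erase_of_isRemovableDoubleRibbon h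
  rw [diagVal_eq_of_isHead (diagVal_image_skewDiag_erase_erase ha hb hba) hc,
    Nat.add_sub_cancel_left]
  exact ⟨ha, hb, hba, rfl⟩

end DoubleRibbon

theorem stmt2_general (k : ℕ) (lam nu : Finset ℕ)
    (hlam : IsStrictPartition lam) :
    (IsRemovableDoubleRibbon lam nu k ↔
      (∃ a ∈ lam, ∃ b ∈ lam, b < a ∧ 1 ≤ b ∧ a + b = k ∧
        nu = (lam.erase a).erase b)) ∧
    (∀ a ∈ lam, ∀ b ∈ lam, b < a → 1 ≤ b → a + b = k →
       nu = (lam.erase a).erase b →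
       ∀ c, IsHead (skewDiag lam nu) c → diagVal c = a) ∧
    (∀ a : ℕ,
      ((∃ nu' : Finset ℕ, IsRemovableDoubleRibbon lam nu' k ∧
          ∃ c, IsHead (skewDiag lam nu') c ∧ diagVal c = a) ↔
        (a ∈ lam ∧ k - a ∈ lam ∧ k - a < a)) ∧
      (∀ nu₁ nu₂ : Finset ℕ,
        IsRemovableDoubleRibbon lam nu₁ k →
        (∃ c, IsHead (skewDiag lam nu₁) c ∧ diagVal c = a) →
        IsRemovableDoubleRibbon lam nu₂ k →
        (∃ c, IsHead (skewDiag lam nu₂) c ∧ diagVal c = a) →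
        nu₁ = nu₂)) := by
  refine ⟨isRemovableDoubleRibbon_iff hlam, ?_, fun a => ⟨⟨?_, ?_⟩, ?_⟩⟩
  · rintro a ha b hb hba - - rfl c hc
    exact diagVal_eq_of_isHead (diagVal_image_skewDiag_erase_erase ha hb hba) hc
  · rintro ⟨nu', h, c, hc, rfl⟩
    obtain ⟨ha, hb, hba, -⟩ := h.eq_erase_erase_of_isHead hc
    exact ⟨ha, hb, hba⟩
  · rintro ⟨ha, hb, hba⟩
    have hb0 : 0 < k - a := hlam _ hb
    have hrib := isRemovableDoubleRibbon_erase_erase ha hb hba hlam hb0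
    rw [show a + (k - a) = k by omega] at hrib
    exact ⟨_, hrib, exists_isHead_diagVal_eq (by omega)
      (diagVal_image_skewDiag_erase_erase ha hb hba)⟩
  · rintro nu₁ nu₂ h₁ ⟨c₁, hc₁, rfl⟩ h₂ ⟨c₂, hc₂, hc⟩
    rw [(h₁.eq_erase_erase_of_isHead hc₁).2.2.2, (h₂.eq_erase_erase_of_isHead hc₂).2.2.2,
      hc]

/-- Characterization of removable double `k`-ribbons of a strict partition
`λ`: they correspond to deleting two parts `a > b ≥ 1` with `a + b = k`; the head has
diagonal value `a`, and the ribbon with a given head diagonal value is unique. -/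
theorem stmt2 (k : ℕ) (hk : 1 ≤ k) (lam nu : Finset ℕ)
    (hlam : IsStrictPartition lam) (hnu : IsStrictPartition nu)
    (hsub : shiftedDiagram nu ⊆ shiftedDiagram lam) :
    (IsRemovableDoubleRibbon lam nu k ↔
      (∃ a ∈ lam, ∃ b ∈ lam, b < a ∧ 1 ≤ b ∧ a + b = k ∧
        nu = (lam.erase a).erase b)) ∧
    (∀ a ∈ lam, ∀ b ∈ lam, b < a → 1 ≤ b → a + b = k →
       nu = (lam.erase a).erase b →
       ∀ c, IsHead (skewDiag lam nu) c → diagVal c = a) ∧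
    (∀ a : ℕ,
      ((∃ nu' : Finset ℕ, IsRemovableDoubleRibbon lam nu' k ∧
          ∃ c, IsHead (skewDiag lam nu') c ∧ diagVal c = a) ↔
        (a ∈ lam ∧ k - a ∈ lam ∧ k - a < a)) ∧
      (∀ nu₁ nu₂ : Finset ℕ,
        IsRemovableDoubleRibbon lam nu₁ k →
        (∃ c, IsHead (skewDiag lam nu₁) c ∧ diagVal c = a) →
        IsRemovableDoubleRibbon lam nu₂ k →
        (∃ c, IsHead (skewDiag lam nu₂) c ∧ diagVal c = a) →
        nu₁ = nu₂)) :=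
  stmt2_general k lam nu hlam
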